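/- arXiv:2506.02768 — 2 statements merged into one kernel-verified Lean document; each statement's English description precedes it below -/
import Mathlib

section
/- For any 3×3 real rotation matrix R ∈ SO(3) and any symmetric positive-definite 3×3 matrix K, the quantity (1/2)·tr(K(I − R)) is nonnegative, and it equals zero if and only if R = I. -/
/-!
Write `A = 1 - R`. Since `Rᵀ R = 1`, `Aᵀ A = A + Aᵀ`, and since `K` is symmetric,
`tr (K Aᵀ) = tr (K A)`; hence `2 tr (K A) = tr (K Aᵀ A) = tr (A K Aᵀ)`.
The matrix `A K Aᵀ` is positive semidefinite, so its trace is nonnegative and vanishes only when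
`A K Aᵀ = 0`. Each diagonal entry of `A K Aᵀ` is the value of the positive definite form `K` at
a row of `A`, so this forces `A = 0`, i.e. `R = 1`.
-/

open Matrix

namespace Matrix

variable {m n R : Type*} [Fintype n]

lemma mul_mul_conjTranspose_apply_self [Ring R] [StarRing R]
    (B : Matrix m n R) (K : Matrix n n R) (i : m) :
    (B * K * Bᴴ) i i = star (star (B i)) ⬝ᵥ K *ᵥ star (B i) := by
  simp only [mul_apply, conjTranspose_apply, star_star, dotProduct, mulVec, Pi.star_apply,
    Finset.sum_mul, Finset.mul_sum, mul_assoc]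
  exact Finset.sum_comm

lemma PosDef.mul_mul_conjTranspose_same_eq_zero_iff [Ring R] [PartialOrder R] [StarRing R]
    {K : Matrix n n R} (hK : K.PosDef) (B : Matrix m n R) : B * K * Bᴴ = 0 ↔ B = 0 := by
  refine ⟨fun h ↦ ?_, fun h ↦ by simp [h]⟩
  ext i j
  by_contra hij
  have hrow : star (B i) ≠ 0 := fun h0 ↦ hij (by simpa using congr_fun h0 j)
  have hpos := hK.dotProduct_mulVec_pos hrow
  rw [← mul_mul_conjTranspose_apply_self, h] at hpos
  exact hpos.ne rfl

lemma trace_one_sub_mul_mul_transpose_one_sub [DecidableEq n] [CommRing R]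
    {Q K : Matrix n n R} (hK : Kᵀ = K) (hQ : Qᵀ * Q = 1) :
    ((1 - Q) * K * (1 - Q)ᵀ).trace = 2 * (K * (1 - Q)).trace := by
  have hKQ : (Qᵀ * K).trace = (K * Q).trace := by
    rw [← trace_transpose, transpose_mul, transpose_transpose, hK]
  rw [trace_mul_cycle, transpose_sub, transpose_one, sub_mul, mul_sub, mul_sub, hQ]
  simp only [one_mul, mul_one, sub_mul, mul_sub, trace_sub, hKQ, trace_mul_comm Q K]
  ring

end Matrix

theorem half_trace_K_one_sub_R_nonneg_general (R K : Matrix (Fin 3) (Fin 3) ℝ)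
    (hRorth : Rᵀ * R = 1) (hK : K.PosDef) :
    0 ≤ (1 / 2 : ℝ) * (K * (1 - R)).trace ∧
      ((1 / 2 : ℝ) * (K * (1 - R)).trace = 0 ↔ R = 1) := by
  have hKt : Kᵀ = K := by
    simpa only [conjTranspose_eq_transpose_of_trivial] using hK.isHermitian.eq
  have hpsd : ((1 - R) * K * (1 - R)ᵀ).PosSemidef := by
    simpa only [conjTranspose_eq_transpose_of_trivial] using
      hK.posSemidef.mul_mul_conjTranspose_same (1 - R)
  have htrace := trace_one_sub_mul_mul_transpose_one_sub hKt hRorth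
  have hzero : (1 - R) * K * (1 - R)ᵀ = 0 ↔ R = 1 := by
    rw [← conjTranspose_eq_transpose_of_trivial, hK.mul_mul_conjTranspose_same_eq_zero_iff,
      sub_eq_zero, eq_comm]
  refine ⟨by linarith [hpsd.trace_nonneg], ?_⟩
  rw [← hzero, ← hpsd.trace_eq_zero_iff, htrace]
  constructor <;> intro h <;> linarith

/-- For a rotation matrix `R ∈ SO(3)` and a symmetric positive-definite matrix `K`,
the quantity `(1/2) · tr (K (I − R))` is nonnegative, and vanishes iff `R = I`. -/
theorem half_trace_K_one_sub_R_nonneg (R K : Matrix (Fin 3) (Fin 3) ℝ)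
    (hRorth : Rᵀ * R = 1) (hRdet : R.det = 1) (hK : K.PosDef) :
    0 ≤ (1 / 2 : ℝ) * (K * (1 - R)).trace ∧
      ((1 / 2 : ℝ) * (K * (1 - R)).trace = 0 ↔ R = 1) :=
  half_trace_K_one_sub_R_nonneg_general R K hRorth hK
end

section
/- Let ω ∈ ℝ³ with ‖ω‖ = 1 and let ω̂ be its skew-symmetric hat matrix. Then for all q ∈ ℝ, the matrix exponential satisfies exp(ω̂ q) = I + ω̂ sin(q) + ω̂² (1 − cos(q)) (Rodrigues' formula). -/
/-!
Unit length of `ω` gives `ω̂³ = -ω̂`, so the odd powers of `ω̂` are `ω̂^(2n+1) = (-1)ⁿ ω̂` and the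
even powers beyond the zeroth are `ω̂^(2n+2) = (-1)ⁿ ω̂²`. Splitting the exponential series of
`q ω̂` into even and odd terms therefore leaves the sine series times `ω̂` and, after the constant
term `1`, the series of `1 - cos q` times `ω̂²`.
-/

open Matrix

/-- The hat (cross-product) matrix of a vector `ω ∈ ℝ³`. -/
def hatMatrix (ω : Fin 3 → ℝ) : Matrix (Fin 3) (Fin 3) ℝ :=
  !![0, -ω 2, ω 1; ω 2, 0, -ω 0; -ω 1, ω 0, 0]

open NormedSpace

open scoped Nat

theorem Real.hasSum_one_sub_cos (r : ℝ) :
    HasSum (fun n : ℕ => (-1) ^ n * r ^ (2 * n + 2) / (2 * n + 2)!) (1 - Real.cos r) := by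
  have h := ((hasSum_nat_add_iff' 1).mpr (Real.hasSum_cos r)).neg
  norm_num [neg_sub] at h
  refine h.congr_fun fun n => ?_
  rw [mul_add_one 2 n]
  ring

section PowThreeEqNeg

variable {M : Type*} [Monoid M] [HasDistribNeg M] {a : M}

theorem pow_two_mul_add_one_of_pow_three_eq_neg (ha : a ^ 3 = -a) (n : ℕ) :
    a ^ (2 * n + 1) = (-1) ^ n * a := by
  induction n with
  | zero => simp
  | succ n ih =>
    calc a ^ (2 * (n + 1) + 1) = a ^ (2 * n + 1) * a ^ 2 := by
          rw [← pow_add, mul_add_one, add_right_comm]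
      _ = (-1) ^ n * a ^ 3 := by rw [ih, mul_assoc, ← pow_succ']
      _ = (-1) ^ (n + 1) * a := by rw [ha, pow_succ, mul_neg_one, neg_mul, mul_neg]

theorem pow_two_mul_add_two_of_pow_three_eq_neg (ha : a ^ 3 = -a) (n : ℕ) :
    a ^ (2 * n + 2) = (-1) ^ n * a ^ 2 := by
  rw [pow_succ, pow_two_mul_add_one_of_pow_three_eq_neg ha, mul_assoc, ← sq]

end PowThreeEqNeg

section ExpOfPowThreeEqNeg

variable {𝔸 : Type*} [Ring 𝔸] [Algebra ℝ 𝔸] [TopologicalSpace 𝔸] [IsTopologicalRing 𝔸]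
  [ContinuousSMul ℝ 𝔸] {A : 𝔸}

theorem hasSum_inv_factorial_smul_pow_of_pow_three_eq_neg (hA : A ^ 3 = -A) (q : ℝ) :
    HasSum (fun n : ℕ => (n !⁻¹ : ℝ) • (q • A) ^ n)
      (1 + (1 - Real.cos q) • A ^ 2 + Real.sin q • A) := by
  simp_rw [smul_pow, smul_smul, ← div_eq_inv_mul]
  have hsign (n : ℕ) : (-1 : 𝔸) ^ n = algebraMap ℝ 𝔸 ((-1) ^ n) := by simp
  refine HasSum.even_add_odd ?_ ?_
  · have h : HasSum (fun n : ℕ => (q ^ (2 * (n + 1)) / (2 * (n + 1))!) • A ^ (2 * (n + 1)))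
        ((1 - Real.cos q) • A ^ 2) := by
      refine ((Real.hasSum_one_sub_cos q).smul_const (A ^ 2)).congr_fun fun n => ?_
      rw [mul_add_one 2 n, pow_two_mul_add_two_of_pow_three_eq_neg hA, hsign, ← Algebra.smul_def,
        smul_smul]
      congr 1
      ring
    simpa using h.zero_add (f := fun n : ℕ => (q ^ (2 * n) / (2 * n)!) • A ^ (2 * n))
  · refine ((Real.hasSum_sin q).smul_const A).congr_fun fun n => ?_
    rw [pow_two_mul_add_one_of_pow_three_eq_neg hA, hsign, ← Algebra.smul_def, smul_smul]
    congr 1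
    ring

theorem exp_smul_of_pow_three_eq_neg [T2Space 𝔸] (hA : A ^ 3 = -A) (q : ℝ) :
    exp (q • A) = 1 + Real.sin q • A + (1 - Real.cos q) • A ^ 2 := by
  rw [exp_eq_tsum ℝ]
  exact (hasSum_inv_factorial_smul_pow_of_pow_three_eq_neg hA q).tsum_eq.trans (by abel)

end ExpOfPowThreeEqNeg

theorem hatMatrix_pow_three (ω : Fin 3 → ℝ) :
    hatMatrix ω ^ 3 = -(ω 0 ^ 2 + ω 1 ^ 2 + ω 2 ^ 2) • hatMatrix ω := by
  ext i j
  fin_cases i <;> fin_cases j <;>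
    simp [hatMatrix, pow_succ, mul_apply, Fin.sum_univ_three] <;> ring

/-- Rodrigues' formula: for a unit vector `ω ∈ ℝ³` and any `q ∈ ℝ`,
`exp(ω̂ q) = I + ω̂ sin q + ω̂² (1 − cos q)`. -/
theorem rodrigues_formula (ω : Fin 3 → ℝ)
    (hω : ω 0 ^ 2 + ω 1 ^ 2 + ω 2 ^ 2 = 1) (q : ℝ) :
    NormedSpace.exp (q • hatMatrix ω) =
      1 + Real.sin q • hatMatrix ω + (1 - Real.cos q) • (hatMatrix ω * hatMatrix ω) := by
  have hcube : hatMatrix ω ^ 3 = -hatMatrix ω := by rw [hatMatrix_pow_three, hω, neg_one_smul]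
  rw [exp_smul_of_pow_three_eq_neg hcube, sq]
end
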